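/- Let S = 2 and let D_Λ = diag(ν₁, ν₁, ν₂e^{2r₂}, ν₂e^{−2r₂}) with ν₁ > 1, ν₂ > 1, r₂ > 0, and ν₂e^{2r₂} = ν₁. Then every quantum covariance matrix Γ whose multiset of eigenvalues equals {ν₁, ν₁, ν₂e^{2r₂}, ν₂e^{−2r₂}} satisfies Γ = Wᵀ D_Λ W for some 4×4 real orthogonal symplectic matrix W. -/

import Mathlib

open Matrix Polynomial
open scoped ComplexOrder

/-- The symplectic form on `2` modes in the ordering `(q₁,p₁,q₂,p₂)`. -/
def Omega4 : Matrix (Fin 4) (Fin 4) ℝ :=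
  !![0, 1, 0, 0; -1, 0, 0, 0; 0, 0, 0, 1; 0, 0, -1, 0]

/-- The diagonal of `D_Λ = diag(ν₁, ν₁, ν₂e^{2r₂}, ν₂e^{-2r₂})`. -/
noncomputable def d14 (ν₁ ν₂ r₂ : ℝ) : Fin 4 → ℝ :=
  ![ν₁, ν₁, ν₂ * Real.exp (2 * r₂), ν₂ * Real.exp (-(2 * r₂))]

/-!
Since `ν₂e^{2r₂} = ν₁`, the spectrum is `{ν₁, ν₁, ν₁, μ}` with `μ = ν₂e^{-2r₂}`, so by the
spectral theorem `Γ = ν₁ • 1 + (μ - ν₁) • v vᵀ` for a unit vector `v`. Orthogonal symplectic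
matrices are the unitaries of `ℝ⁴ ≅ ℂ²`, which act transitively on the unit sphere `S³`; hence
some such `W` has last row `v`, and then `Wᵀ D_Λ W = ν₁ • WᵀW + (μ - ν₁) • v vᵀ = Γ`.
-/

section Multiset

variable {ι α : Type*} [Fintype ι]

lemma roots_prod_univ_X_sub_C {R : Type*} [CommRing R] [IsDomain R] (f : ι → R) :
    (∏ i, (X - C (f i))).roots = Finset.univ.val.map f := by
  rw [Finset.prod_eq_multiset_prod, ← roots_multiset_prod_X_sub_C (Finset.univ.val.map f),
    Multiset.map_map]
  rfl

variable [DecidableEq ι]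

lemma Finset.map_univ_val_eq_cons (f : ι → α) (i : ι) :
    Finset.univ.val.map f = f i ::ₘ (Finset.univ.erase i).val.map f := by
  rw [← Multiset.map_cons, Finset.erase_val, Multiset.cons_erase (Finset.mem_univ i)]

lemma exists_eq_update_of_map_univ_eq {f : ι → α} {a b : α} {i : ι}
    (h : Finset.univ.val.map f = Finset.univ.val.map (Function.update (fun _ => a) i b)) :
    ∃ j, f = Function.update (fun _ => a) j b := by
  obtain ⟨j, -, hj⟩ : ∃ j ∈ Finset.univ.val, f j = b := by
    rw [← Multiset.mem_map, h]
    exact Multiset.mem_map.2 ⟨i, Finset.mem_univ i, by simp⟩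
  refine ⟨j, funext fun x => ?_⟩
  rcases eq_or_ne x j with rfl | hx
  · simp [hj]
  have hrest : (Finset.univ.erase j).val.map f
      = (Finset.univ.erase i).val.map (Function.update (fun _ => a) i b) := by
    rw [Finset.map_univ_val_eq_cons f j, Finset.map_univ_val_eq_cons _ i, hj] at h
    simpa using h
  obtain ⟨y, hy, hyx⟩ := Multiset.mem_map.1
    (hrest ▸ Multiset.mem_map_of_mem f (Finset.mem_erase.2 ⟨hx, Finset.mem_univ x⟩))
  simp_all [Finset.ne_of_mem_erase hy]

end Multiset

section RankOne

variable {R : Type*} [CommRing R] {n : Type*} [DecidableEq n]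

lemma diagonal_update_eq_smul_one_add_single (a b : R) (k : n) :
    diagonal (Function.update (fun _ => a) k b) = a • 1 + (b - a) • single k k 1 := by
  ext i j
  simp only [diagonal_apply, Function.update_apply, Matrix.add_apply, Matrix.smul_apply,
    one_apply, single_apply, smul_eq_mul]
  grind

variable [Fintype n]

lemma transpose_mul_single_mul (W : Matrix n n R) (k : n) :
    Wᵀ * single k k 1 * W = vecMulVec (W.row k) (W.row k) := by
  rw [single_eq_single_vecMulVec_single, mul_vecMulVec, vecMulVec_mul, mulVec_single_one,
    single_one_vecMul, col_transpose]

lemma transpose_mul_smul_one_add_single_mul {W : Matrix n n R} (hW : Wᵀ * W = 1) (a b : R)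
    (k : n) :
    Wᵀ * (a • 1 + b • single k k 1) * W = a • 1 + b • vecMulVec (W.row k) (W.row k) := by
  rw [mul_add, add_mul, mul_smul_comm, mul_one, smul_mul_assoc, hW, mul_smul_comm,
    smul_mul_assoc, transpose_mul_single_mul]

namespace Matrix.IsHermitian

variable {A : Matrix n n ℝ}

lemma map_eigenvalues_eq_of_charpoly_eq (hA : A.IsHermitian) {d : n → ℝ}
    (h : A.charpoly = ∏ i, (X - C (d i))) :
    Finset.univ.val.map hA.eigenvalues = Finset.univ.val.map d := by
  have hchar := hA.charpoly_eq
  simp only [RCLike.ofReal_real_eq_id, id] at hchar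
  rw [← roots_prod_univ_X_sub_C, ← roots_prod_univ_X_sub_C, ← hchar, h]

lemma exists_eq_smul_one_add_vecMulVec (hA : A.IsHermitian) {a b : ℝ} {i : n}
    (he : hA.eigenvalues = Function.update (fun _ => a) i b) :
    ∃ v : n → ℝ, v ⬝ᵥ v = 1 ∧ A = a • 1 + (b - a) • vecMulVec v v := by
  set U : Matrix n n ℝ := ↑hA.eigenvectorUnitary
  have hspec : A = U * diagonal hA.eigenvalues * Uᵀ := by
    simpa [RCLike.ofReal_real_eq_id, star_eq_conjTranspose] using hA.spectral_theorem
  have hU : U * Uᵀ = 1 ∧ Uᵀ * U = 1 := by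
    simpa [star_eq_conjTranspose] using
      And.intro (mem_unitaryGroup_iff.1 hA.eigenvectorUnitary.2)
        (mem_unitaryGroup_iff'.1 hA.eigenvectorUnitary.2)
  refine ⟨Uᵀ.row i, ?_, ?_⟩
  · simpa [mul_apply, dotProduct] using congrFun (congrFun hU.2 i) i
  · rw [hspec, he, diagonal_update_eq_smul_one_add_single]
    simpa only [transpose_transpose] using
      transpose_mul_smul_one_add_single_mul (W := Uᵀ) (by rw [transpose_transpose]; exact hU.1)
        a (b - a) i

end Matrix.IsHermitian

end RankOne

/-- Its transpose is the unitary of `(ℝ⁴, Ω) ≅ ℂ²` sending the last basis vector to `v` (and hence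
the third one to `Ω v`), built as for `SU(2)`. -/
def orthoSymplecticOfLastRow (v : Fin 4 → ℝ) : Matrix (Fin 4) (Fin 4) ℝ :=
  !![-v 2, v 3, v 0, -v 1; -v 3, -v 2, v 1, v 0; v 1, -v 0, v 3, -v 2; v 0, v 1, v 2, v 3]

lemma orthoSymplecticOfLastRow_mul_transpose (v : Fin 4 → ℝ) :
    orthoSymplecticOfLastRow v * (orthoSymplecticOfLastRow v)ᵀ = (v ⬝ᵥ v) • 1 := by
  ext i j
  fin_cases i <;> fin_cases j <;>
    simp [orthoSymplecticOfLastRow, mul_apply, Fin.sum_univ_four, dotProduct] <;> ring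

lemma Omega4_mul_orthoSymplecticOfLastRow (v : Fin 4 → ℝ) :
    Omega4 * orthoSymplecticOfLastRow v = orthoSymplecticOfLastRow v * Omega4 := by
  ext i j
  fin_cases i <;> fin_cases j <;>
    simp [Omega4, orthoSymplecticOfLastRow, mul_apply, Fin.sum_univ_four]

lemma row_orthoSymplecticOfLastRow (v : Fin 4 → ℝ) :
    (orthoSymplecticOfLastRow v).row 3 = v := by
  ext k; fin_cases k <;> rfl

lemma exists_orthoSymplectic_row_eq {v : Fin 4 → ℝ} (hv : v ⬝ᵥ v = 1) :
    ∃ W : Matrix (Fin 4) (Fin 4) ℝ,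
      Wᵀ * W = 1 ∧ Wᵀ * Omega4 * W = Omega4 ∧ W.row 3 = v := by
  set W := orthoSymplecticOfLastRow v
  have hW : Wᵀ * W = 1 := mul_eq_one_comm.1 <| by
    rw [orthoSymplecticOfLastRow_mul_transpose, hv, one_smul]
  refine ⟨W, hW, ?_, row_orthoSymplecticOfLastRow v⟩
  rw [mul_assoc, Omega4_mul_orthoSymplecticOfLastRow, ← mul_assoc, hW, one_mul]

theorem two_mode_degenerate_example (ν₁ ν₂ r₂ : ℝ)
    (heq : ν₂ * Real.exp (2 * r₂) = ν₁)
    (Γ : Matrix (Fin 4) (Fin 4) ℝ)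
    (hsymm : Γ.IsSymm)
    (hchar : Γ.charpoly = ∏ j : Fin 4, (X - C (d14 ν₁ ν₂ r₂ j))) :
    ∃ W : Matrix (Fin 4) (Fin 4) ℝ,
      Wᵀ * W = 1 ∧ Wᵀ * Omega4 * W = Omega4 ∧
      Γ = Wᵀ * Matrix.diagonal (d14 ν₁ ν₂ r₂) * W := by
  set μ := ν₂ * Real.exp (-(2 * r₂))
  have hd : d14 ν₁ ν₂ r₂ = Function.update (fun _ => ν₁) 3 μ := by
    funext k; fin_cases k <;> simp [d14, heq, μ]
  have hΓ : Γ.IsHermitian := isHermitian_iff_isSymm.2 hsymm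
  obtain ⟨i, he⟩ :=
    exists_eq_update_of_map_univ_eq (hd ▸ hΓ.map_eigenvalues_eq_of_charpoly_eq hchar)
  obtain ⟨v, hv, hΓv⟩ := hΓ.exists_eq_smul_one_add_vecMulVec he
  obtain ⟨W, hWW, hWΩ, hWv⟩ := exists_orthoSymplectic_row_eq hv
  refine ⟨W, hWW, hWΩ, ?_⟩
  rw [hd, diagonal_update_eq_smul_one_add_single, transpose_mul_smul_one_add_single_mul hWW, hWv,
    hΓv]
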